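/- arXiv:1608.08438 — 7 statements merged into one kernel-verified Lean document; each statement's English description precedes it below -/
import Mathlib

section
/- Let R be an integrally closed domain, k a subfield of R, k₁ a separable algebraic field extension of k, and S = k₁ ⊗_k R. If P' is a prime ideal of S whose contraction to R along the canonical map R → S, r ↦ 1 ⊗ r, is the zero ideal, then the quotient ring S/P' is an integral domain that is integrally closed in its field of fractions. -/
/-!
Write `A = S ⧸ P'`. As the contraction of `P'` is zero, `R` embeds in `A`, and `A` is generated
over `R` by the image of `k₁`. By the primitive element theorem `A` is then the directed union of
the subalgebras `R[β]`, where `β` is the image of some `α ∈ k₁` and so a root of the monic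
separable polynomial `minpoly k α ∈ R[X]`. An element `x` of `Frac A` integral over `A` is
integral over `R` and lies in some `K(β)`, `K = Frac R`. The trace dual of `R[β]` in `K(β)` is
`g'(β)⁻¹ R[β]` for `g` the minimal polynomial of `β` (Euler), and `g'(β)` divides the unit
`f'(β)` of `R[β]` whenever `f ∈ R[X]` is separable with `f(β) = 0`. Hence every element of
`K(β)` integral over `R` lies in `R[β] ⊆ A`.
-/

open TensorProduct Polynomial IntermediateField

section

variable {R K L : Type*} [CommRing R] [IsDomain R] [IsIntegrallyClosed R]
  [Field K] [Algebra R K] [IsFractionRing R K]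
  [Field L] [Algebra K L] [Algebra R L] [IsScalarTower R K L]
  [FiniteDimensional K L] [Algebra.IsSeparable K L]

theorem aeval_derivative_minpoly_mul_mem_adjoin {x : L} (hx : Algebra.adjoin K {x} = ⊤)
    (hxR : IsIntegral R x) {z : L} (hz : IsIntegral R z) :
    aeval x (derivative (minpoly R x)) * z ∈ Algebra.adjoin R {x} := by
  have hd : aeval x (derivative (minpoly R x)) = aeval x (derivative (minpoly K x)) := by
    rw [minpoly.isIntegrallyClosed_eq_field_fractions' K hxR, derivative_map,
      aeval_map_algebraMap]
  have hd0 : aeval x (derivative (minpoly K x)) ≠ 0 :=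
    (Algebra.IsSeparable.isSeparable K x).aeval_derivative_ne_zero (minpoly.aeval K x)
  have hdual : z ∈ (Algebra.traceForm K L).dualSubmodule
      (Subalgebra.toSubmodule (Algebra.adjoin R {x})) := fun y hy ↦
    Submodule.mem_one.mpr <| IsIntegrallyClosed.isIntegral_iff.mp <|
      Algebra.isIntegral_trace (hz.mul (adjoin_le_integralClosure hxR hy))
  rw [traceForm_dualSubmodule_adjoin R K hx hxR,
    Submodule.mem_smul_iff_inv_mul_mem (inv_ne_zero hd0), inv_inv] at hdual
  rwa [hd]

theorem mem_adjoin_of_isIntegral_of_separable {x : L} (hx : Algebra.adjoin K {x} = ⊤)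
    (hxR : IsIntegral R x) {f : R[X]} (hf : f.Separable) (hfx : aeval x f = 0)
    {z : L} (hz : IsIntegral R z) : z ∈ Algebra.adjoin R {x} := by
  have hdvd : minpoly R x ∣ f := by
    refine (map_dvd_map _ (IsFractionRing.injective R K) (minpoly.monic hxR)).mp ?_
    rw [← minpoly.isIntegrallyClosed_eq_field_fractions' K hxR]
    exact minpoly.dvd K x (by rw [aeval_map_algebraMap, hfx])
  obtain ⟨q, rfl⟩ := hdvd
  obtain ⟨u, v, huv⟩ := hf
  have hinv : aeval x v * (aeval x (derivative (minpoly R x)) * aeval x q) = 1 := by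
    simpa [derivative_mul, minpoly.aeval] using congrArg (aeval x) huv
  have hz_eq : z = aeval x v * aeval x q * (aeval x (derivative (minpoly R x)) * z) := by
    linear_combination (-z) * hinv
  rw [hz_eq]
  exact mul_mem (mul_mem (aeval_mem_adjoin_singleton R x) (aeval_mem_adjoin_singleton R x))
    (aeval_derivative_minpoly_mul_mem_adjoin hx hxR hz)

end

theorem mem_adjoin_of_isIntegral_of_mem_adjoin_simple {R K F : Type*} [CommRing R] [IsDomain R]
    [IsIntegrallyClosed R] [Field K] [Algebra R K] [IsFractionRing R K]
    [Field F] [Algebra K F] [Algebra R F] [IsScalarTower R K F]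
    {x : F} {f : R[X]} (hmonic : f.Monic) (hf : f.Separable) (hfx : aeval x f = 0)
    {z : F} (hzx : z ∈ K⟮x⟯) (hz : IsIntegral R z) :
    z ∈ Algebra.adjoin R {x} := by
  have hxR : IsIntegral R x := ⟨f, hmonic, hfx⟩
  have hxK : IsIntegral K x := hxR.tower_top
  have : FiniteDimensional K K⟮x⟯ := adjoin.finiteDimensional hxK
  have : Algebra.IsSeparable K K⟮x⟯ := by
    rw [isSeparable_adjoin_simple_iff_isSeparable]
    exact (hf.map (f := algebraMap R K)).of_dvd
      (minpoly.dvd K x (by rw [aeval_map_algebraMap, hfx]))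
  have hgen : Algebra.adjoin K {AdjoinSimple.gen K x} = ⊤ := by
    simpa using (adjoin.powerBasis hxK).adjoin_gen_eq_top
  let ι : K⟮x⟯ →ₐ[R] F := (val _).restrictScalars R
  have hroot : aeval (AdjoinSimple.gen K x) f = 0 := by
    apply Subtype.val_injective
    change ι _ = ι 0
    rw [← aeval_algHom_apply, map_zero]
    exact hfx
  have hmem := mem_adjoin_of_isIntegral_of_separable hgen
    ((isIntegral_algHom_iff ι Subtype.val_injective (x := AdjoinSimple.gen K x)).mp hxR) hf hroot
    ((isIntegral_algHom_iff ι Subtype.val_injective (x := ⟨z, hzx⟩)).mp hz)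
  have hmap : ι ⟨z, hzx⟩ ∈ (Algebra.adjoin R {AdjoinSimple.gen K x}).map ι :=
    Subalgebra.mem_map.mpr ⟨_, hmem, rfl⟩
  rwa [AlgHom.map_adjoin_singleton] at hmap

theorem isIntegrallyClosed_of_directed_adjoin {R A : Type*} [CommRing R] [IsDomain R]
    [IsIntegrallyClosed R] [CommRing A] [IsDomain A] [Algebra R A] [FaithfulSMul R A]
    {ι : Type*} (β : ι → A) (hβ : ∀ i, ∃ f : R[X], f.Monic ∧ f.Separable ∧ aeval (β i) f = 0)
    (hdir : Directed (· ≤ ·) fun i ↦ Algebra.adjoin R {β i})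
    (hcover : ∀ a : A, ∃ i, a ∈ Algebra.adjoin R {β i}) :
    IsIntegrallyClosed A := by
  have : Algebra.IsIntegral R A := ⟨fun a ↦
    let ⟨i, hi⟩ := hcover a
    let ⟨f, hmonic, _, hf⟩ := hβ i
    adjoin_le_integralClosure ⟨f, hmonic, hf⟩ hi⟩
  let F := FractionRing A
  have : FaithfulSMul R F := (faithfulSMul_iff_algebraMap_injective R F).mpr <| by
    rw [IsScalarTower.algebraMap_eq R A F]
    exact (IsFractionRing.injective A F).comp (FaithfulSMul.algebraMap_injective R A)
  let K := FractionRing R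
  let _ : Algebra K F := FractionRing.liftAlgebra R F
  rw [isIntegrallyClosed_iff F]
  intro x hx
  obtain ⟨a, b, -, rfl⟩ := IsFractionRing.div_surjective (A := A) x
  obtain ⟨i, ha⟩ := hcover a
  obtain ⟨j, hb⟩ := hcover b
  obtain ⟨l, hil, hjl⟩ := hdir i j
  obtain ⟨f, hmonic, hsep, hf⟩ := hβ l
  let φ := IsScalarTower.toAlgHom R A F
  have hmap : ∀ c ∈ Algebra.adjoin R {β l}, φ c ∈ K⟮φ (β l)⟯ := by
    intro c hc
    have hle : Algebra.adjoin R {φ (β l)} ≤ (K⟮φ (β l)⟯).toSubalgebra.restrictScalars R :=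
      Algebra.adjoin_le (Set.singleton_subset_iff.mpr (mem_adjoin_simple_self _ _))
    exact hle (AlgHom.map_adjoin_singleton φ (β l) ▸ Subalgebra.mem_map.mpr ⟨c, hc, rfl⟩)
  have hxβ := mem_adjoin_of_isIntegral_of_mem_adjoin_simple hmonic hsep
    (by rw [aeval_algHom_apply, hf, map_zero]) (div_mem (hmap a (hil ha)) (hmap b (hjl hb)))
    (isIntegral_trans _ hx)
  rw [← AlgHom.map_adjoin_singleton] at hxβ
  obtain ⟨y, -, hy⟩ := hxβ
  exact ⟨y, hy⟩

theorem exists_mem_adjoin_singleton_of_isSeparable {k K : Type*} [Field k] [Field K]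
    [Algebra k K] [Algebra.IsSeparable k K] (x y : K) :
    ∃ α : K, x ∈ Algebra.adjoin k {α} ∧ y ∈ Algebra.adjoin k {α} := by
  have : FiniteDimensional k k⟮x, y⟯ :=
    finiteDimensional_adjoin fun z _ ↦ (Algebra.IsSeparable.isSeparable k z).isIntegral
  have := Algebra.isSeparable_tower_bot_of_isSeparable k k⟮x, y⟯ K
  obtain ⟨⟨α, _⟩, hα⟩ := Field.exists_primitive_element k k⟮x, y⟯
  apply_fun IntermediateField.map (val _) at hα
  rw [adjoin_map, ← AlgHom.fieldRange_eq_map] at hα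
  simp only [coe_val, Set.image_singleton, fieldRange_val] at hα
  refine ⟨α, ?_⟩
  rw [← adjoin_simple_toSubalgebra_of_isAlgebraic
    (Algebra.IsSeparable.isSeparable k α).isIntegral.isAlgebraic, hα]
  exact ⟨subset_adjoin k {x, y} (by simp), subset_adjoin k {x, y} (by simp)⟩

attribute [local instance] Algebra.TensorProduct.rightAlgebra in
theorem Algebra.TensorProduct.adjoin_range_includeLeft_eq_top {R A B : Type*} [CommSemiring R]
    [CommSemiring A] [Algebra R A] [CommSemiring B] [Algebra R B] :
    Algebra.adjoin B (Set.range (includeLeft : A →ₐ[R] A ⊗[R] B)) = ⊤ := by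
  refine Algebra.eq_top_iff.mpr fun x ↦ ?_
  induction x using _root_.TensorProduct.induction_on with
  | zero => exact zero_mem _
  | tmul a b =>
    rw [← mul_one a, ← one_mul b, ← tmul_mul_tmul]
    exact mul_mem (Algebra.subset_adjoin ⟨a, rfl⟩) (Subalgebra.algebraMap_mem _ b)
  | add x y hx hy => exact add_mem hx hy

theorem AlgHom.map_mem_adjoin_singleton {k B R A : Type*} [CommSemiring k] [CommSemiring B]
    [Algebra k B] [CommSemiring R] [Algebra k R] [CommSemiring A] [Algebra k A] [Algebra R A]
    [IsScalarTower k R A] (χ : B →ₐ[k] A) {x α : B} (hx : x ∈ Algebra.adjoin k {α}) :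
    χ x ∈ Algebra.adjoin R {χ α} := by
  rw [Algebra.adjoin_singleton_eq_range_aeval] at hx
  obtain ⟨p, rfl⟩ := hx
  change χ (aeval α p) ∈ _
  rw [← aeval_algHom_apply, ← aeval_map_algebraMap R]
  exact aeval_mem_adjoin_singleton R _

theorem isIntegrallyClosed_of_adjoin_range_eq_top {k k₁ R A : Type*} [Field k] [Field k₁]
    [Algebra k k₁] [Algebra.IsSeparable k k₁] [CommRing R] [IsDomain R] [IsIntegrallyClosed R]
    [Algebra k R] [CommRing A] [IsDomain A] [Algebra k A] [Algebra R A] [IsScalarTower k R A]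
    [FaithfulSMul R A] (χ : k₁ →ₐ[k] A)
    (hχ : Algebra.adjoin R (Set.range χ) = ⊤) : IsIntegrallyClosed A := by
  have hdir : Directed (· ≤ ·) fun α ↦ Algebra.adjoin R {χ α} := fun α₁ α₂ ↦ by
    obtain ⟨γ, h₁, h₂⟩ := exists_mem_adjoin_singleton_of_isSeparable (k := k) α₁ α₂
    exact ⟨γ, Algebra.adjoin_le (Set.singleton_subset_iff.mpr (χ.map_mem_adjoin_singleton h₁)),
      Algebra.adjoin_le (Set.singleton_subset_iff.mpr (χ.map_mem_adjoin_singleton h₂))⟩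
  have hsup : ⨆ α, Algebra.adjoin R {χ α} = ⊤ := by
    rw [← Algebra.adjoin_iUnion, Set.iUnion_singleton_eq_range, hχ]
  refine isIntegrallyClosed_of_directed_adjoin (R := R) χ (fun α ↦ ?_) hdir (fun a ↦ ?_)
  · have hα := Algebra.IsSeparable.isSeparable k α
    refine ⟨(minpoly k α).map (algebraMap k R), (minpoly.monic hα.isIntegral).map _,
      Separable.map hα, ?_⟩
    rw [aeval_map_algebraMap, aeval_algHom_apply, minpoly.aeval, map_zero]
  · have ha : a ∈ ((⨆ α, Algebra.adjoin R {χ α} : Subalgebra R A) : Set A) := by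
      rw [hsup]; trivial
    rwa [Subalgebra.coe_iSup_of_directed hdir, Set.mem_iUnion] at ha

/-- Let `R` be an integrally closed domain, `k` a subfield of `R`,
`k₁` a separable algebraic field extension of `k`, and `S = k₁ ⊗[k] R`.  If `P'` is a
prime ideal of `S` whose contraction to `R` along `r ↦ 1 ⊗ r` is zero, then `S ⧸ P'`
is an integrally closed domain. -/
theorem quotient_by_prime_with_zero_contraction_isIntegrallyClosed
    (k : Type*) [Field k] (R : Type*) [CommRing R] [IsDomain R] [IsIntegrallyClosed R]
    [Algebra k R] (k₁ : Type*) [Field k₁] [Algebra k k₁] [Algebra.IsSeparable k k₁]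
    (P' : Ideal (k₁ ⊗[k] R)) (hP' : P'.IsPrime)
    (hc : P'.comap (Algebra.TensorProduct.includeRight : R →ₐ[k] k₁ ⊗[k] R).toRingHom = ⊥) :
    IsDomain ((k₁ ⊗[k] R) ⧸ P') ∧ IsIntegrallyClosed ((k₁ ⊗[k] R) ⧸ P') := by
  let _ := Algebra.TensorProduct.rightAlgebra (R := k) (A := k₁) (B := R)
  have : FaithfulSMul R ((k₁ ⊗[k] R) ⧸ P') := by
    refine (faithfulSMul_iff_algebraMap_injective _ _).mpr
      ((injective_iff_map_eq_zero (algebraMap R ((k₁ ⊗[k] R) ⧸ P'))).mpr fun r hr ↦ ?_)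
    have : r ∈ P'.comap Algebra.TensorProduct.includeRight.toRingHom :=
      (Ideal.Quotient.eq_zero_iff_mem (I := P')).mp hr
    rwa [hc, Ideal.mem_bot] at this
  have hgen : Algebra.adjoin R (Set.range
      ((Ideal.Quotient.mkₐ k P').comp Algebra.TensorProduct.includeLeft)) = ⊤ := by
    have hmk : ⇑(Ideal.Quotient.mkₐ k P') = Ideal.Quotient.mkₐ R P' := rfl
    rw [AlgHom.coe_comp, Set.range_comp, hmk, ← AlgHom.map_adjoin,
      Algebra.TensorProduct.adjoin_range_includeLeft_eq_top, Algebra.map_top, AlgHom.range_eq_top]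
    exact Ideal.Quotient.mkₐ_surjective R P'
  exact ⟨Ideal.Quotient.isDomain P', isIntegrallyClosed_of_adjoin_range_eq_top _ hgen⟩
end

section
/- Let p be a prime, let S be a commutative ring of characteristic p, and let S' be a subring of S such that for every b ∈ S there exists a natural number n with b^{p^n} ∈ S'. Then the contraction map P ↦ P ∩ S' is an inclusion-preserving bijection from the set of prime ideals of S onto the set of prime ideals of S'; its inverse sends a prime ideal q of S' to the prime ideal {b ∈ S | ∃ n, b^{p^n} ∈ q} of S. -/
/-! If some power of every `b : S` lies in `S'`, then `S` is integral over `S'`, so by lying over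
every prime of `S'` is a contraction. A prime (indeed radical) ideal `P` of `S` contains `b` as
soon as it contains a power of `b`, and some power of `b` lies in `S'`; hence `P` is determined by
`P ∩ S'`, which gives both the injectivity and the inverse formula. -/

section

variable {S : Type*} [CommRing S] {S' : Subring S}

theorem Algebra.IsIntegral.of_forall_exists_pow_mem_subring
    (h : ∀ b : S, ∃ n ≠ 0, b ^ n ∈ S') : Algebra.IsIntegral S' S where
  isIntegral b := by
    obtain ⟨n, hn, hbn⟩ := h b
    exact .of_pow (Nat.pos_of_ne_zero hn)
      (isIntegral_algebraMap (A := S) (x := (⟨b ^ n, hbn⟩ : S')))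

namespace Ideal

theorem comap_subtype_le_comap_subtype_iff (h : ∀ b : S, ∃ n ≠ 0, b ^ n ∈ S')
    {P₁ P₂ : Ideal S} (hP₂ : P₂.IsRadical) :
    P₁.comap S'.subtype ≤ P₂.comap S'.subtype ↔ P₁ ≤ P₂ := by
  refine ⟨fun hle b hb => ?_, comap_mono⟩
  obtain ⟨n, hn, hbn⟩ := h b
  have hbn₁ : (⟨b ^ n, hbn⟩ : S') ∈ P₁.comap S'.subtype :=
    P₁.pow_mem_of_mem hb n (Nat.pos_of_ne_zero hn)
  exact hP₂ ⟨n, hle hbn₁⟩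

theorem exists_isPrime_comap_subtype_eq (h : ∀ b : S, ∃ n ≠ 0, b ^ n ∈ S')
    (q : Ideal S') [q.IsPrime] : ∃ P : Ideal S, P.IsPrime ∧ P.comap S'.subtype = q := by
  have := Algebra.IsIntegral.of_forall_exists_pow_mem_subring h
  obtain ⟨P, hP, hPq⟩ := (nonempty_primesOver q (S := S)).some
  exact ⟨P, hP, ((liesOver_iff P q).mp hPq).symm⟩

end Ideal

end

theorem prime_contraction_bijective_of_pow_mem_general
    (p : ℕ) (hp : p.Prime) (S : Type*) [CommRing S]
    (S' : Subring S) (hpow : ∀ b : S, ∃ n : ℕ, b ^ p ^ n ∈ S') :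
    -- contraction preserves primality
    (∀ P : Ideal S, P.IsPrime → (P.comap S'.subtype).IsPrime) ∧
    -- contraction is inclusion-preserving and inclusion-reflecting (hence injective) on primes
    (∀ P₁ P₂ : Ideal S, P₁.IsPrime → P₂.IsPrime →
      (P₁.comap S'.subtype ≤ P₂.comap S'.subtype ↔ P₁ ≤ P₂)) ∧
    -- every prime of `S'` is the contraction of a unique prime of `S`, given by the
    -- explicit inverse formula
    (∀ q : Ideal S', q.IsPrime → ∃! P : Ideal S, P.IsPrime ∧ P.comap S'.subtype = q) ∧
    (∀ q : Ideal S', q.IsPrime → ∀ P : Ideal S, P.IsPrime → P.comap S'.subtype = q →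
      ∀ b : S, b ∈ P ↔ ∃ n : ℕ, ∃ h : b ^ p ^ n ∈ S', (⟨b ^ p ^ n, h⟩ : S') ∈ q) := by
  have h : ∀ b : S, ∃ n ≠ 0, b ^ n ∈ S' := fun b =>
    have ⟨n, hn⟩ := hpow b; ⟨p ^ n, pow_ne_zero n hp.ne_zero, hn⟩
  refine ⟨fun P hP => hP.comap _,
    fun P₁ P₂ _ hP₂ => Ideal.comap_subtype_le_comap_subtype_iff h hP₂.isRadical, ?_, ?_⟩
  · intro q hq
    obtain ⟨P, hP, hPq⟩ := Ideal.exists_isPrime_comap_subtype_eq h q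
    refine ⟨P, ⟨hP, hPq⟩, fun P' ⟨hP', hP'q⟩ => le_antisymm ?_ ?_⟩
    · exact (Ideal.comap_subtype_le_comap_subtype_iff h hP.isRadical).mp (hP'q.trans hPq.symm).le
    · exact (Ideal.comap_subtype_le_comap_subtype_iff h hP'.isRadical).mp (hPq.trans hP'q.symm).le
  · rintro q - P hP rfl b
    refine ⟨fun hb => ?_, fun ⟨n, _, hbn⟩ => hP.mem_of_pow_mem _ hbn⟩
    obtain ⟨n, hn⟩ := hpow b
    exact ⟨n, hn, P.pow_mem_of_mem hb _ (pow_pos hp.pos n)⟩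

/-- Let `p` be a prime, `S` a commutative ring of characteristic `p`,
and `S'` a subring of `S` such that every `b ∈ S` has some `p^n`-th power in `S'`.
Then `P ↦ P ∩ S'` is an inclusion-preserving bijection from the primes of `S` onto the
primes of `S'`, whose inverse sends a prime `q` of `S'` to `{b ∈ S | ∃ n, b ^ p ^ n ∈ q}`. -/
theorem prime_contraction_bijective_of_pow_mem
    (p : ℕ) (hp : p.Prime) (S : Type*) [CommRing S] [CharP S p]
    (S' : Subring S) (hpow : ∀ b : S, ∃ n : ℕ, b ^ p ^ n ∈ S') :
    -- contraction preserves primality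
    (∀ P : Ideal S, P.IsPrime → (P.comap S'.subtype).IsPrime) ∧
    -- contraction is inclusion-preserving and inclusion-reflecting (hence injective) on primes
    (∀ P₁ P₂ : Ideal S, P₁.IsPrime → P₂.IsPrime →
      (P₁.comap S'.subtype ≤ P₂.comap S'.subtype ↔ P₁ ≤ P₂)) ∧
    -- every prime of `S'` is the contraction of a unique prime of `S`, given by the
    -- explicit inverse formula
    (∀ q : Ideal S', q.IsPrime → ∃! P : Ideal S, P.IsPrime ∧ P.comap S'.subtype = q) ∧
    (∀ q : Ideal S', q.IsPrime → ∀ P : Ideal S, P.IsPrime → P.comap S'.subtype = q →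
      ∀ b : S, b ∈ P ↔ ∃ n : ℕ, ∃ h : b ^ p ^ n ∈ S', (⟨b ^ p ^ n, h⟩ : S') ∈ q) :=
  prime_contraction_bijective_of_pow_mem_general p hp S S' hpow
end

section
/- Let k be a field of prime characteristic p, let k₁ be a purely inseparable algebraic field extension of k, let R be a commutative k-algebra, and let S = k₁ ⊗_k R. If P₁ and P₂ are prime ideals of S whose contractions to R along the canonical map R → S, r ↦ 1 ⊗ r, coincide, then P₁ = P₂; that is, every prime ideal of S is uniquely determined by its contraction to R. -/
open TensorProduct

/-! Some `p`-power of every element of `k₁ ⊗[k] R` lies in the image of `R`, and `R → k₁ ⊗[k] R`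
is injective, so `Spec (k₁ ⊗[k] R) → Spec R` is a homeomorphism; in particular it is injective. -/

lemma PrimeSpectrum.isHomeomorph_comap_includeRight_of_isPurelyInseparable
    (k K R : Type*) [Field k] [Field K] [Algebra k K] [IsPurelyInseparable k K]
    [CommRing R] [Algebra k R] :
    IsHomeomorph (comap (Algebra.TensorProduct.includeRight : R →ₐ[k] K ⊗[k] R).toRingHom) := by
  rw [← Algebra.TensorProduct.comm_comp_includeLeft]
  exact (isHomeomorph_comap_of_isPurelyInseparable k K R).comp
    (isHomeomorph_comap_of_bijective (Algebra.TensorProduct.comm k R K).bijective)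

theorem prime_eq_of_contraction_eq_of_purelyInseparable_general
    (k : Type*) [Field k]
    (k₁ : Type*) [Field k₁] [Algebra k k₁] [IsPurelyInseparable k k₁]
    (R : Type*) [CommRing R] [Algebra k R]
    (P₁ P₂ : Ideal (k₁ ⊗[k] R)) (h₁ : P₁.IsPrime) (h₂ : P₂.IsPrime)
    (hc : P₁.comap (Algebra.TensorProduct.includeRight : R →ₐ[k] k₁ ⊗[k] R).toRingHom =
          P₂.comap (Algebra.TensorProduct.includeRight : R →ₐ[k] k₁ ⊗[k] R).toRingHom) :
    P₁ = P₂ :=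
  congrArg PrimeSpectrum.asIdeal <|
    (PrimeSpectrum.isHomeomorph_comap_includeRight_of_isPurelyInseparable k k₁ R).injective
      (a₁ := ⟨P₁, h₁⟩) (a₂ := ⟨P₂, h₂⟩) (PrimeSpectrum.ext hc)

/-- Let `k` be a field of prime characteristic `p`, `k₁` a purely
inseparable algebraic extension of `k`, `R` a commutative `k`-algebra and
`S = k₁ ⊗[k] R`.  Every prime ideal of `S` is uniquely determined by its contraction
to `R` along the canonical map `r ↦ 1 ⊗ r`. -/
theorem prime_eq_of_contraction_eq_of_purelyInseparable
    (k : Type*) [Field k] (p : ℕ) [Fact p.Prime] [CharP k p]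
    (k₁ : Type*) [Field k₁] [Algebra k k₁] [IsPurelyInseparable k k₁]
    (R : Type*) [CommRing R] [Algebra k R]
    (P₁ P₂ : Ideal (k₁ ⊗[k] R)) (h₁ : P₁.IsPrime) (h₂ : P₂.IsPrime)
    (hc : P₁.comap (Algebra.TensorProduct.includeRight : R →ₐ[k] k₁ ⊗[k] R).toRingHom =
          P₂.comap (Algebra.TensorProduct.includeRight : R →ₐ[k] k₁ ⊗[k] R).toRingHom) :
    P₁ = P₂ :=
  prime_eq_of_contraction_eq_of_purelyInseparable_general k k₁ R P₁ P₂ h₁ h₂ hc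
end

section
/- Let R be an integral domain with field of fractions F, and let f ∈ R[T] be a monic polynomial of positive degree. Then the set of prime ideals of the quotient ring R[T]/(f) whose contraction to R along the canonical map R → R[T]/(f) is the zero ideal is finite, and its cardinality equals the number of distinct monic irreducible factors of f in F[T]. -/
/-!
Inverting the nonzero constants turns `R[T]` into `F[T]`. A prime of `R[T]/(f)` with zero
contraction to `R` is thus a prime of `R[T]` containing `f` and meeting no nonzero constant,
i.e. the contraction of a prime of the principal ideal domain `F[T]` containing `f`, and the
latter are generated by the monic irreducible factors of `f`.
-/

open Polynomial

theorem Ideal.bijOn_comap_isPrime_comap_comp_eq_bot {R S T : Type*} [CommRing R] [CommRing S]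
    [CommRing T] {f : S →+* T} (hf : Function.Surjective f) (φ : R →+* S) :
    Set.BijOn (Ideal.comap f) {P : Ideal T | P.IsPrime ∧ P.comap (f.comp φ) = ⊥}
      {Q : Ideal S | Q.IsPrime ∧ RingHom.ker f ≤ Q ∧ Q.comap φ = ⊥} := by
  refine ⟨fun P ⟨hP, hP0⟩ => ⟨hP.comap f, Ideal.comap_mono bot_le, ?_⟩,
    (Ideal.comap_injective_of_surjective f hf).injOn, fun Q ⟨hQ, hker, hQ0⟩ => ?_⟩
  · rwa [Ideal.comap_comap]
  · have hcomap : (Q.map f).comap f = Q := by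
      rw [Ideal.comap_map_of_surjective f hf, ← RingHom.ker_eq_comap_bot, sup_eq_left.mpr hker]
    refine ⟨Q.map f, ⟨Ideal.map_isPrime_of_surjective hf hker, ?_⟩, hcomap⟩
    rwa [← Ideal.comap_comap, hcomap]

theorem IsLocalization.bijOn_comap_isPrime_mem {R S : Type*} [CommSemiring R] [CommSemiring S]
    [Algebra R S] (M : Submonoid R) [IsLocalization M S] (a : R) :
    Set.BijOn (Ideal.comap (algebraMap R S)) {J : Ideal S | J.IsPrime ∧ algebraMap R S a ∈ J}
      {Q : Ideal R | Q.IsPrime ∧ a ∈ Q ∧ Disjoint (M : Set R) Q} := by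
  refine ⟨fun J ⟨hJ, ha⟩ => ?_, fun J _ J' _ h => ?_, fun Q ⟨hQ, ha, hdisj⟩ => ?_⟩
  · obtain ⟨hQ, hdisj⟩ := (IsLocalization.isPrime_iff_isPrime_disjoint M S J).mp hJ
    exact ⟨hQ, ha, hdisj⟩
  · exact (IsLocalization.orderEmbedding M S).injective h
  · exact ⟨Q.map (algebraMap R S), ⟨IsLocalization.isPrime_of_isPrime_disjoint M S Q hQ hdisj,
      Ideal.mem_map_of_mem _ ha⟩, IsLocalization.under_map_of_isPrime_disjoint M S hQ hdisj⟩

theorem Ideal.comap_eq_bot_iff_disjoint_map_nonZeroDivisors {R S : Type*} [CommRing R]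
    [IsDomain R] [Semiring S] (φ : R →+* S) (Q : Ideal S) :
    Q.comap φ = ⊥ ↔ Disjoint ((nonZeroDivisors R).map φ : Set S) Q := by
  rw [eq_bot_iff, Set.disjoint_left]
  constructor
  · rintro h _ ⟨r, hr, rfl⟩ hrQ
    exact nonZeroDivisors.ne_zero hr (Ideal.mem_bot.mp (h hrQ))
  · intro h r hr
    by_contra hr0
    exact h ⟨r, mem_nonZeroDivisors_of_ne_zero hr0, rfl⟩ hr

theorem Polynomial.finite_setOf_monic_irreducible_dvd {K : Type*} [Field K] {p : K[X]}
    (hp : p ≠ 0) : {g : K[X] | g.Monic ∧ Irreducible g ∧ g ∣ p}.Finite := by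
  classical
  refine (UniqueFactorizationMonoid.normalizedFactors p).toFinset.finite_toSet.subset ?_
  rintro g ⟨hmonic, hirr, hdvd⟩
  rw [Finset.mem_coe, Multiset.mem_toFinset, Polynomial.mem_normalizedFactors_iff hp]
  exact ⟨hirr, hmonic, hdvd⟩

theorem Polynomial.bijOn_span_singleton_monic_irreducible_dvd {K : Type*} [Field K] {p : K[X]}
    (hp : p ≠ 0) :
    Set.BijOn (fun g => Ideal.span {g}) {g : K[X] | g.Monic ∧ Irreducible g ∧ g ∣ p}
      {J : Ideal K[X] | J.IsPrime ∧ p ∈ J} := by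
  classical
  refine ⟨fun g ⟨_, hirr, hdvd⟩ => ⟨(Ideal.span_singleton_prime hirr.ne_zero).mpr hirr.prime,
    Ideal.mem_span_singleton.mpr hdvd⟩, fun g ⟨hg, _⟩ g' ⟨hg', _⟩ h => ?_, fun J ⟨hJ, hpJ⟩ => ?_⟩
  · exact eq_of_monic_of_associated hg hg' (Ideal.span_singleton_eq_span_singleton.mp h)
  · obtain ⟨q, rfl⟩ : ∃ q, J = Ideal.span {q} :=
      ⟨Submodule.IsPrincipal.generator J, (Ideal.span_singleton_generator J).symm⟩
    have hq : q ≠ 0 := by rintro rfl; simp_all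
    have hirr : Irreducible q := ((Ideal.span_singleton_prime hq).mp hJ).irreducible
    have hspan : Ideal.span {normalize q} = Ideal.span {q} :=
      Ideal.span_singleton_eq_span_singleton.mpr (normalize_associated q)
    refine ⟨normalize q, ⟨monic_normalize hq, (normalize_associated q).symm.irreducible hirr,
      ?_⟩, hspan⟩
    rwa [← Ideal.mem_span_singleton, hspan]

theorem card_primes_over_generic_fiber_eq_card_irreducible_factors_general
    (R : Type*) [CommRing R] [IsDomain R]
    (f : R[X]) (hf : f.Monic) :
    {P : Ideal (R[X] ⧸ Ideal.span {f}) | P.IsPrime ∧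
        P.comap ((Ideal.Quotient.mk (Ideal.span {f})).comp (C : R →+* R[X])) = ⊥}.Finite ∧
    {P : Ideal (R[X] ⧸ Ideal.span {f}) | P.IsPrime ∧
        P.comap ((Ideal.Quotient.mk (Ideal.span {f})).comp (C : R →+* R[X])) = ⊥}.ncard =
      {g : (FractionRing R)[X] | g.Monic ∧ Irreducible g ∧
        g ∣ f.map (algebraMap R (FractionRing R))}.ncard := by
  let := Polynomial.algebra R (FractionRing R)
  have := Polynomial.isLocalization (nonZeroDivisors R) (FractionRing R)
  have hf₀ : f.map (algebraMap R (FractionRing R)) ≠ 0 := (hf.map _).ne_zero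
  have hquot := Ideal.bijOn_comap_isPrime_comap_comp_eq_bot
    (Ideal.Quotient.mk_surjective (I := Ideal.span {f})) C
  have hfactors := (IsLocalization.bijOn_comap_isPrime_mem (S := (FractionRing R)[X])
    ((nonZeroDivisors R).map C) f).comp (Polynomial.bijOn_span_singleton_monic_irreducible_dvd hf₀)
  have hsame :
      {Q : Ideal R[X] | Q.IsPrime ∧ f ∈ Q ∧ Disjoint ((nonZeroDivisors R).map C : Set R[X]) Q} =
      {Q | Q.IsPrime ∧ RingHom.ker (Ideal.Quotient.mk (Ideal.span {f})) ≤ Q ∧ Q.comap C = ⊥} := by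
    simp only [Ideal.mk_ker, Ideal.span_singleton_le_iff_mem,
      Ideal.comap_eq_bot_iff_disjoint_map_nonZeroDivisors]
  rw [hsame] at hfactors
  exact ⟨hquot.finite_iff_finite.mpr (hfactors.finite_iff_finite.mp
      (Polynomial.finite_setOf_monic_irreducible_dvd hf₀)),
    hquot.ncard_eq.trans hfactors.ncard_eq.symm⟩

/-- Let `R` be a domain with fraction field `F` and `f ∈ R[T]` monic
of positive degree.  The set of primes of `R[T]⧸(f)` contracting to `(0)` in `R` is
finite, of cardinality the number of distinct monic irreducible factors of `f` in
`F[T]`. -/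
theorem card_primes_over_generic_fiber_eq_card_irreducible_factors
    (R : Type*) [CommRing R] [IsDomain R]
    (f : R[X]) (hf : f.Monic) (hdeg : 0 < f.natDegree) :
    {P : Ideal (R[X] ⧸ Ideal.span {f}) | P.IsPrime ∧
        P.comap ((Ideal.Quotient.mk (Ideal.span {f})).comp (C : R →+* R[X])) = ⊥}.Finite ∧
    {P : Ideal (R[X] ⧸ Ideal.span {f}) | P.IsPrime ∧
        P.comap ((Ideal.Quotient.mk (Ideal.span {f})).comp (C : R →+* R[X])) = ⊥}.ncard =
      {g : (FractionRing R)[X] | g.Monic ∧ Irreducible g ∧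
        g ∣ f.map (algebraMap R (FractionRing R))}.ncard :=
  card_primes_over_generic_fiber_eq_card_irreducible_factors_general R f hf
end

section
/- Let X be a nonempty compact topological space and let f : X → X be a continuous map. Then there exists a recurrent point for f, i.e., a point x ∈ X such that x lies in the closure of the set {f^n(x) | n ≥ 1} of its strictly forward iterates. -/
/-!
Zorn's lemma and Cantor's intersection theorem give a minimal nonempty closed `f`-invariant
set `K`. For `x ∈ K`, the closure of `{f^n x | n ≥ 1}` is again nonempty, closed and
invariant, and it lies in `K`; by minimality it is all of `K`, so it contains `x`.
-/

open Set

section Orbit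

variable {α : Type*} (f : α → α)

def strictForwardOrbit (x : α) : Set α := {y | ∃ n, 1 ≤ n ∧ f^[n] x = y}

theorem mapsTo_strictForwardOrbit (x : α) :
    MapsTo f (strictForwardOrbit f x) (strictForwardOrbit f x) := by
  rintro _ ⟨n, hn, rfl⟩
  exact ⟨n + 1, by omega, Function.iterate_succ_apply' f n x⟩

variable {f}

theorem strictForwardOrbit_subset {K : Set α} (hK : MapsTo f K K) {x : α} (hx : x ∈ K) :
    strictForwardOrbit f x ⊆ K := by
  rintro _ ⟨n, -, rfl⟩
  exact hK.iterate n hx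

end Orbit

section MinimalSet

variable {X : Type*} [TopologicalSpace X]

def IsNonemptyClosedInvariant (f : X → X) (K : Set X) : Prop :=
  K.Nonempty ∧ IsClosed K ∧ MapsTo f K K

theorem IsNonemptyClosedInvariant.sInter_of_isChain [CompactSpace X] {f : X → X}
    {c : Set (Set X)} (hc : ∀ K ∈ c, IsNonemptyClosedInvariant f K)
    (hchain : IsChain (· ⊆ ·) c) (hne : c.Nonempty) :
    IsNonemptyClosedInvariant f (⋂₀ c) := by
  have : Nonempty c := hne.to_subtype
  have hdir : DirectedOn (· ⊇ ·) c :=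
    IsChain.directedOn (r := fun s t : Set X ↦ t ⊆ s) hchain.symm
  refine ⟨?_, isClosed_sInter fun K hK ↦ (hc K hK).2.1, ?_⟩
  · exact IsCompact.nonempty_sInter_of_directed_nonempty_isCompact_isClosed
      hdir (fun K hK ↦ (hc K hK).1) (fun K hK ↦ (hc K hK).2.1.isCompact)
      (fun K hK ↦ (hc K hK).2.1)
  · exact fun x hx K hK ↦ (hc K hK).2.2 (hx K hK)

theorem exists_minimal_isNonemptyClosedInvariant [CompactSpace X] [Nonempty X] (f : X → X) :
    ∃ K, Minimal (IsNonemptyClosedInvariant f) K := by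
  obtain ⟨K, -, hK⟩ := zorn_superset_nonempty {K | IsNonemptyClosedInvariant f K}
    (fun c hc hchain hne ↦ ⟨⋂₀ c, IsNonemptyClosedInvariant.sInter_of_isChain hc hchain hne,
      fun _ ↦ sInter_subset_of_mem⟩)
    univ ⟨univ_nonempty, isClosed_univ, mapsTo_univ f _⟩
  exact ⟨K, hK⟩

theorem Minimal.mem_closure_strictForwardOrbit {f : X → X} (hf : Continuous f) {K : Set X}
    (hK : Minimal (IsNonemptyClosedInvariant f) K) {x : X} (hx : x ∈ K) :
    x ∈ closure (strictForwardOrbit f x) := by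
  have hsub : closure (strictForwardOrbit f x) ⊆ K :=
    closure_minimal (strictForwardOrbit_subset hK.prop.2.2 hx) hK.prop.2.1
  have hinv : IsNonemptyClosedInvariant f (closure (strictForwardOrbit f x)) :=
    ⟨⟨f x, subset_closure ⟨1, le_rfl, rfl⟩⟩, isClosed_closure,
      (mapsTo_strictForwardOrbit f x).closure hf⟩
  exact hK.eq_of_subset hinv hsub ▸ hx

end MinimalSet

/-- Every continuous self-map of a nonempty compact topological space
has a recurrent point: a point `x` lying in the closure of its set of strictly forward
iterates `{f^n(x) | n ≥ 1}`. -/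
theorem exists_recurrent_point
    (X : Type*) [TopologicalSpace X] [CompactSpace X] [Nonempty X]
    (f : X → X) (hf : Continuous f) :
    ∃ x : X, x ∈ closure {y : X | ∃ n : ℕ, 1 ≤ n ∧ f^[n] x = y} := by
  obtain ⟨K, hK⟩ := exists_minimal_isNonemptyClosedInvariant f
  obtain ⟨x, hx⟩ := hK.prop.1
  exact ⟨x, hK.mem_closure_strictForwardOrbit hf hx⟩
end

section
/- Let Ω be a field with a ring automorphism σ, let K be a subfield of Ω with σ(K) = K, and let a = (a₁,…,a_r) be a tuple of elements of Ω. For n ≥ 0 set K_n = K(σ^i(a_j) : 0 ≤ i ≤ n, 1 ≤ j ≤ r), and assume each degree [K_{n+1} : K_n] is finite; the sequence ([K_{n+1} : K_n])_n is non-increasing, and its eventual constant value is the limit degree ld_σ(a/K). Suppose m is such that [K_{m+1} : K_m] = ld_σ(a/K), and let b be the tuple (σ^i(a_j) : 0 ≤ i ≤ m, 1 ≤ j ≤ r). Then ld_σ(b/K) = ld_σ(a/K), and for every ℓ ≥ 1 the limit degree of b over K with respect to σ^ℓ is attained at the first step: setting L_n = K(σ^{ℓ i}(b) : 0 ≤ i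 ≤ n), one has [L_{n+1} : L_n] = [L₁ : L₀] for all n ≥ 0. -/
/-!
Write `K_u = K(σ^t(a) : t ≤ u)` and `d_u = [K_{u+1} : K_u]`. Since `K_{u+2}` is `K_{u+1}` with
`σ(K_{u+1})` adjoined, and `σ(K_{u+1})` has degree `d_u` over `σ(K_u) ⊆ K_{u+1}`, we get
`d_{u+1} ≤ d_u`: adjoining a field finite over a subfield `D` to a larger field `E ⊇ D` does not
increase the degree. Hence `d_u = ld` for `u ≥ m`. The `σ`-chain of `b` is `K_{n+m}`.

For `σ^ℓ`, the field `L_n` is generated by the blocks `B_i = σ^{ℓi}(K_m)`, `i ≤ n`, and lies in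
`K_{ℓn+m}`. The same base change principle bounds `[L_{n+1} : L_n]` above by
`[B_n B_{n+1} : B_n] = [L_1 : L_0]` and below by `c_n = [K_{ℓn+m} B_{n+1} : K_{ℓn+m}]`.
Its cofactor `g_n = [K_{ℓ(n+1)+m} : K_{ℓn+m} B_{n+1}]` satisfies `c_n g_n = ld^ℓ` and
`g_n ≤ g_0` (base change of `σ^{ℓn}(K_{ℓ+m})` over `σ^{ℓn}(K_m B_1)`), so `c_n ≥ c_0 = [L_1 : L_0]`.
-/

set_option synthInstance.maxHeartbeats 1000000
set_option maxHeartbeats 2000000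

/-- The degree `[E(E') : E]` of the subfield of `Ω` generated by `E'` over `E`;
for `E ≤ E'` this is the degree of the field extension `E ⊆ E'`.  (It is `0` when
this degree is infinite.) -/
noncomputable def sdeg {Ω : Type*} [Field Ω] (E E' : Subfield Ω) : ℕ :=
  Module.finrank E (IntermediateField.adjoin E (E' : Set Ω))

/-- The subfield `K(σ^{ℓ i}(c_j) : 0 ≤ i ≤ n, j)` of `Ω`. -/
def seqField {Ω : Type*} [Field Ω] (σ : Ω ≃+* Ω) (K : Subfield Ω) {ι : Type*}
    (c : ι → Ω) (ℓ n : ℕ) : Subfield Ω :=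
  Subfield.closure ((K : Set Ω) ∪ {x | ∃ j : ι, ∃ i : ℕ, i ≤ n ∧ x = (σ ^ (ℓ * i)) (c j)})

open Set Cardinal

section Relrank

variable {Ω : Type*} [Field Ω]

theorem sdeg_eq_relfinrank_of_le {E F : Subfield Ω} (h : E ≤ F) : sdeg E F = E.relfinrank F := by
  have : IntermediateField.adjoin E (F : Set Ω) = Subfield.extendScalars h :=
    IntermediateField.toSubfield_injective <| by
      simp [Subfield.closure_union, show range (algebraMap E Ω) = E from Subtype.range_coe, h]
  rw [sdeg, this, Subfield.relfinrank_eq_finrank_of_le]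

namespace Subfield

theorem relfinrank_ne_zero_iff {A B : Subfield Ω} : A.relfinrank B ≠ 0 ↔ A.relrank B < ℵ₀ := by
  rw [relfinrank_eq_toNat_relrank, toNat_ne_zero,
    and_iff_right (show A.relrank B ≠ 0 from rank_pos.ne')]

theorem relrank_sup_le_of_le {D E F : Subfield Ω} (hDE : D ≤ E) (hDF : D ≤ F)
    (hfin : D.relrank F < ℵ₀) : E.relrank (E ⊔ F) ≤ D.relrank F := by
  set A := extendScalars hDE
  set B := extendScalars hDF
  rw [relrank_eq_rank_of_le hDF] at hfin ⊢
  have : Module.Finite D B := Module.rank_lt_aleph0_iff.mp hfin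
  have hAB : IntermediateField.adjoin A (B : Set Ω) =
      IntermediateField.extendScalars (le_sup_left : A ≤ A ⊔ B) := by
    refine IntermediateField.restrictScalars_injective D ?_
    rw [IntermediateField.extendScalars_restrictScalars, IntermediateField.restrictScalars_adjoin,
      IntermediateField.adjoin_union, IntermediateField.adjoin_self, IntermediateField.adjoin_self]
  have key := IntermediateField.adjoin_rank_le_of_isAlgebraic_right A B
  rwa [hAB, ← IntermediateField.relrank_eq_rank_of_le, IntermediateField.relrank,
    IntermediateField.sup_toSubfield, extendScalars_toSubfield, extendScalars_toSubfield] at key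

theorem relfinrank_sup_le_of_le {D E F : Subfield Ω} (hDE : D ≤ E) (hDF : D ≤ F)
    (h : D.relfinrank F ≠ 0) : E.relfinrank (E ⊔ F) ≤ D.relfinrank F :=
  toNat_le_toNat (relrank_sup_le_of_le hDE hDF (relfinrank_ne_zero_iff.1 h))
    (relfinrank_ne_zero_iff.1 h)

theorem relfinrank_sup_ne_zero_of_le {D E F : Subfield Ω} (hDE : D ≤ E) (hDF : D ≤ F)
    (h : D.relfinrank F ≠ 0) : E.relfinrank (E ⊔ F) ≠ 0 :=
  relfinrank_ne_zero_iff.2 <| (relrank_sup_le_of_le hDE hDF (relfinrank_ne_zero_iff.1 h)).trans_lt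
    (relfinrank_ne_zero_iff.1 h)

end Subfield

end Relrank

def block (ℓ m i : ℕ) : Set ℕ := Icc (ℓ * i) (ℓ * i + m)

/-- Since `b` lists `σ^i(a)` for `i ≤ m`, the field `K(σ^{ℓi}(b) : i ≤ n)` is generated over `K`
by the iterates `σ^t(a)` with `t ∈ blocks ℓ m n`. -/
def blocks (ℓ m n : ℕ) : Set ℕ := ⋃ i ≤ n, block ℓ m i

theorem block_zero (ℓ m : ℕ) : block ℓ m 0 = Icc 0 m := by
  simp [block]

theorem blocks_zero (ℓ m : ℕ) : blocks ℓ m 0 = block ℓ m 0 := by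
  simp [blocks]

theorem blocks_succ (ℓ m n : ℕ) : blocks ℓ m (n + 1) = blocks ℓ m n ∪ block ℓ m (n + 1) :=
  biUnion_le_succ _ n

theorem block_subset_blocks (ℓ m n : ℕ) : block ℓ m n ⊆ blocks ℓ m n :=
  subset_biUnion_of_mem (u := block ℓ m) (show n ≤ n from le_rfl)

theorem blocks_subset_Icc (ℓ m n : ℕ) : blocks ℓ m n ⊆ Icc 0 (ℓ * n + m) :=
  iUnion₂_subset fun _ hi ↦ Icc_subset_Icc (Nat.zero_le _) (by gcongr)

theorem blocks_one_left (m n : ℕ) : blocks 1 m n = Icc 0 (n + m) := by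
  ext t
  simp only [blocks, block, one_mul, mem_iUnion, mem_Icc, exists_prop]
  exact ⟨fun ⟨i, hi, _, hti⟩ ↦ ⟨Nat.zero_le t, by omega⟩, fun ⟨_, ht⟩ ↦ ⟨t - min t m, by omega⟩⟩

theorem image_const_add_block (ℓ m k i : ℕ) :
    (ℓ * k + ·) '' block ℓ m i = block ℓ m (k + i) := by
  rw [block, image_const_add_Icc, block, mul_add, add_assoc]

section Iterates

variable {Ω : Type*} [Field Ω] (σ : Ω ≃+* Ω) (K : Subfield Ω) {ι : Type*} (a : ι → Ω)

def adjoinIterates (S : Set ℕ) : Subfield Ω :=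
  Subfield.closure (K ∪ ⋃ t ∈ S, range fun j ↦ (σ ^ t) (a j))

noncomputable def stepDegree (n : ℕ) : ℕ :=
  (adjoinIterates σ K a (Icc 0 n)).relfinrank (adjoinIterates σ K a (Icc 0 (n + 1)))

noncomputable def blockDegree (ℓ m n : ℕ) : ℕ :=
  (adjoinIterates σ K a (blocks ℓ m n)).relfinrank (adjoinIterates σ K a (blocks ℓ m (n + 1)))

variable {σ K a}

theorem adjoinIterates_mono {S T : Set ℕ} (h : S ⊆ T) :
    adjoinIterates σ K a S ≤ adjoinIterates σ K a T :=
  Subfield.closure_mono <| union_subset_union_right _ <| biUnion_subset_biUnion_left h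

theorem adjoinIterates_union (S T : Set ℕ) :
    adjoinIterates σ K a (S ∪ T) = adjoinIterates σ K a S ⊔ adjoinIterates σ K a T := by
  rw [adjoinIterates, adjoinIterates, adjoinIterates, ← Subfield.closure_union, biUnion_union,
    union_union_distrib_left]

theorem Subfield.map_pow_eq_self (hK : K.map (σ : Ω →+* Ω) = K) (k : ℕ) :
    K.map ((σ ^ k : Ω ≃+* Ω) : Ω →+* Ω) = K := by
  induction k with
  | zero => ext; simp
  | succ k ih =>
    calc K.map ((σ ^ (k + 1) : Ω ≃+* Ω) : Ω →+* Ω)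
        _ = (K.map (σ : Ω →+* Ω)).map (σ ^ k : Ω ≃+* Ω) := by rw [Subfield.map_map, pow_succ]; rfl
        _ = K := by rw [hK, ih]

theorem map_adjoinIterates (hK : K.map (σ : Ω →+* Ω) = K) (k : ℕ) (S : Set ℕ) :
    (adjoinIterates σ K a S).map ((σ ^ k : Ω ≃+* Ω) : Ω →+* Ω) =
      adjoinIterates σ K a ((k + ·) '' S) := by
  rw [adjoinIterates, RingHom.map_field_closure, image_union, ← Subfield.coe_map,
    Subfield.map_pow_eq_self hK, image_iUnion₂, adjoinIterates, biUnion_image]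
  simp_rw [← range_comp]
  congr! with t - j
  simp [pow_add]

theorem relfinrank_adjoinIterates_image_const_add (hK : K.map (σ : Ω →+* Ω) = K) (k : ℕ)
    (S T : Set ℕ) :
    (adjoinIterates σ K a ((k + ·) '' S)).relfinrank (adjoinIterates σ K a ((k + ·) '' T)) =
      (adjoinIterates σ K a S).relfinrank (adjoinIterates σ K a T) := by
  rw [← map_adjoinIterates hK, ← map_adjoinIterates hK, Subfield.relfinrank_map_map]

theorem seqField_mono (ℓ : ℕ) : Monotone (seqField σ K a ℓ) := fun _ _ h ↦
  Subfield.closure_mono <| union_subset_union_right _ fun _ ⟨j, i, hi, hx⟩ ↦ ⟨j, i, hi.trans h, hx⟩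

theorem seqField_one_eq_adjoinIterates (n : ℕ) :
    seqField σ K a 1 n = adjoinIterates σ K a (Icc 0 n) := by
  rw [seqField, adjoinIterates]
  congr 2
  ext x
  simp only [one_mul, mem_ofPred_eq, mem_iUnion, mem_range, mem_Icc, exists_prop, Nat.zero_le,
    true_and]
  exact ⟨fun ⟨j, i, hi, hx⟩ ↦ ⟨i, hi, j, hx.symm⟩, fun ⟨i, hi, j, hx⟩ ↦ ⟨j, i, hi, hx.symm⟩⟩

theorem seqField_eq_adjoinIterates_blocks {m : ℕ} {b : ι × Fin (m + 1) → Ω}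
    (hb : ∀ j i, b (j, i) = (σ ^ (i : ℕ)) (a j)) (ℓ n : ℕ) :
    seqField σ K b ℓ n = adjoinIterates σ K a (blocks ℓ m n) := by
  have hσb : ∀ s j i, (σ ^ s) (b (j, i)) = (σ ^ (s + i)) (a j) := by
    intro s j i
    rw [hb, pow_add, RingAut.mul_apply]
  rw [seqField, adjoinIterates]
  congr 2
  ext x
  simp only [blocks, block, mem_ofPred_eq, mem_iUnion, mem_range, mem_Icc, exists_prop]
  constructor
  · rintro ⟨⟨j, i'⟩, i, hi, rfl⟩
    exact ⟨ℓ * i + i', ⟨i, hi, by omega, by omega⟩, j, (hσb _ _ _).symm⟩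
  · rintro ⟨t, ⟨i, hi, hit, hti⟩, j, rfl⟩
    refine ⟨(j, ⟨t - ℓ * i, by omega⟩), i, hi, ?_⟩
    rw [hσb, Nat.add_sub_cancel' hit]

end Iterates

section LimitDegree

variable {Ω : Type*} [Field Ω] {σ : Ω ≃+* Ω} {K : Subfield Ω} {ι : Type*} {a : ι → Ω}

theorem stepDegree_succ_le_of_ne_zero (hK : K.map (σ : Ω →+* Ω) = K) {n : ℕ}
    (h : stepDegree σ K a n ≠ 0) :
    stepDegree σ K a (n + 1) ≠ 0 ∧ stepDegree σ K a (n + 1) ≤ stepDegree σ K a n := by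
  have hshift : (adjoinIterates σ K a (Icc 1 (n + 1))).relfinrank
      (adjoinIterates σ K a (Icc 1 (n + 1 + 1))) = stepDegree σ K a n := by
    simpa [stepDegree, image_const_add_Icc, add_comm 1] using
      relfinrank_adjoinIterates_image_const_add hK 1 (Icc 0 n) (Icc 0 (n + 1))
  have hDE : adjoinIterates σ K a (Icc 1 (n + 1)) ≤ adjoinIterates σ K a (Icc 0 (n + 1)) :=
    adjoinIterates_mono (Icc_subset_Icc_left (Nat.zero_le 1))
  have hDF : adjoinIterates σ K a (Icc 1 (n + 1)) ≤ adjoinIterates σ K a (Icc 1 (n + 1 + 1)) :=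
    adjoinIterates_mono (Icc_subset_Icc_right (Nat.le_succ _))
  have hsup : adjoinIterates σ K a (Icc 0 (n + 1)) ⊔ adjoinIterates σ K a (Icc 1 (n + 1 + 1)) =
      adjoinIterates σ K a (Icc 0 (n + 1 + 1)) := by
    rw [← adjoinIterates_union]
    congr 1
    ext
    simp only [mem_union, mem_Icc]
    omega
  rw [← hshift] at h ⊢
  rw [stepDegree, ← hsup]
  exact ⟨Subfield.relfinrank_sup_ne_zero_of_le hDE hDF h,
    Subfield.relfinrank_sup_le_of_le hDE hDF h⟩

theorem stepDegree_eq_of_le (hK : K.map (σ : Ω →+* Ω) = K) {m N ld : ℕ}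
    (hm : stepDegree σ K a m = ld) (hld : ld ≠ 0) (hN : ∀ n ≥ N, stepDegree σ K a n = ld)
    {n : ℕ} (hn : m ≤ n) : stepDegree σ K a n = ld := by
  have hne : ∀ k, stepDegree σ K a (m + k) ≠ 0 := by
    intro k
    induction k with
    | zero => rw [add_zero, hm]; exact hld
    | succ k ih => exact (stepDegree_succ_le_of_ne_zero hK ih).1
  have hanti : Antitone fun k ↦ stepDegree σ K a (m + k) :=
    antitone_nat_of_succ_le fun k ↦ (stepDegree_succ_le_of_ne_zero hK (hne k)).2
  obtain ⟨k, rfl⟩ := Nat.exists_eq_add_of_le hn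
  refine le_antisymm ((hanti (Nat.zero_le k)).trans_eq (by simpa using hm)) ?_
  calc ld = stepDegree σ K a (m + (k + N)) := (hN _ (by omega)).symm
    _ ≤ stepDegree σ K a (m + k) := hanti (Nat.le_add_right k N)

theorem relfinrank_adjoinIterates_Icc_add {s ld : ℕ} (h : ∀ n ≥ s, stepDegree σ K a n = ld)
    (t : ℕ) :
    (adjoinIterates σ K a (Icc 0 s)).relfinrank (adjoinIterates σ K a (Icc 0 (s + t))) =
      ld ^ t := by
  induction t with
  | zero => exact Subfield.relfinrank_self _
  | succ t ih =>
    rw [← add_assoc, ← Subfield.relfinrank_mul_relfinrank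
      (adjoinIterates_mono (Icc_subset_Icc_right (Nat.le_add_right s t)))
      (adjoinIterates_mono (Icc_subset_Icc_right (Nat.le_succ _))), ih, pow_succ]
    exact congrArg _ (h _ (Nat.le_add_right s t))

theorem blockDegree_le_blockDegree_zero (hK : K.map (σ : Ω →+* Ω) = K) {ℓ m : ℕ}
    (h : blockDegree σ K a ℓ m 0 ≠ 0) (n : ℕ) :
    blockDegree σ K a ℓ m n ≠ 0 ∧ blockDegree σ K a ℓ m n ≤ blockDegree σ K a ℓ m 0 := by
  have hshift : (adjoinIterates σ K a (block ℓ m n)).relfinrank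
      (adjoinIterates σ K a (block ℓ m n ∪ block ℓ m (n + 1))) = blockDegree σ K a ℓ m 0 := by
    have := relfinrank_adjoinIterates_image_const_add (a := a) hK (ℓ * n) (block ℓ m 0)
      (block ℓ m 0 ∪ block ℓ m 1)
    rw [image_union, image_const_add_block, image_const_add_block, add_zero] at this
    rw [this, blockDegree, blocks_succ, blocks_zero]
  have hDE : adjoinIterates σ K a (block ℓ m n) ≤ adjoinIterates σ K a (blocks ℓ m n) :=
    adjoinIterates_mono (block_subset_blocks ℓ m n)
  have hDF : adjoinIterates σ K a (block ℓ m n) ≤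
      adjoinIterates σ K a (block ℓ m n ∪ block ℓ m (n + 1)) :=
    adjoinIterates_mono subset_union_left
  have hsup : adjoinIterates σ K a (blocks ℓ m n) ⊔
      adjoinIterates σ K a (block ℓ m n ∪ block ℓ m (n + 1)) =
      adjoinIterates σ K a (blocks ℓ m (n + 1)) := by
    rw [← adjoinIterates_union, ← union_assoc, union_eq_left.2 (block_subset_blocks ℓ m n),
      blocks_succ]
  rw [← hshift] at h ⊢
  rw [blockDegree, ← hsup]
  exact ⟨Subfield.relfinrank_sup_ne_zero_of_le hDE hDF h,
    Subfield.relfinrank_sup_le_of_le hDE hDF h⟩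

theorem relfinrank_Icc_union_block_le_blockDegree {ℓ m n : ℕ} (h : blockDegree σ K a ℓ m n ≠ 0) :
    (adjoinIterates σ K a (Icc 0 (ℓ * n + m))).relfinrank
      (adjoinIterates σ K a (Icc 0 (ℓ * n + m) ∪ block ℓ m (n + 1))) ≤ blockDegree σ K a ℓ m n := by
  have hDE : adjoinIterates σ K a (blocks ℓ m n) ≤ adjoinIterates σ K a (Icc 0 (ℓ * n + m)) :=
    adjoinIterates_mono (blocks_subset_Icc ℓ m n)
  have hDF : adjoinIterates σ K a (blocks ℓ m n) ≤ adjoinIterates σ K a (blocks ℓ m (n + 1)) :=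
    adjoinIterates_mono (blocks_succ ℓ m n ▸ subset_union_left)
  have hsup : adjoinIterates σ K a (Icc 0 (ℓ * n + m)) ⊔ adjoinIterates σ K a (blocks ℓ m (n + 1)) =
      adjoinIterates σ K a (Icc 0 (ℓ * n + m) ∪ block ℓ m (n + 1)) := by
    rw [← adjoinIterates_union, blocks_succ, ← union_assoc,
      union_eq_left.2 (blocks_subset_Icc ℓ m n)]
  rw [← hsup]
  exact Subfield.relfinrank_sup_le_of_le hDE hDF h

theorem relfinrank_mul_relfinrank_Icc_union_block {m ld : ℕ}
    (h : ∀ n ≥ m, stepDegree σ K a n = ld) (ℓ n : ℕ) :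
    (adjoinIterates σ K a (Icc 0 (ℓ * n + m))).relfinrank
        (adjoinIterates σ K a (Icc 0 (ℓ * n + m) ∪ block ℓ m (n + 1))) *
      (adjoinIterates σ K a (Icc 0 (ℓ * n + m) ∪ block ℓ m (n + 1))).relfinrank
        (adjoinIterates σ K a (Icc 0 (ℓ * (n + 1) + m))) = ld ^ ℓ := by
  have hsub : Icc 0 (ℓ * n + m) ∪ block ℓ m (n + 1) ⊆ Icc 0 (ℓ * (n + 1) + m) :=
    union_subset (Icc_subset_Icc_right (by rw [mul_add_one]; omega))
      (Icc_subset_Icc_left (Nat.zero_le _))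
  rw [Subfield.relfinrank_mul_relfinrank (adjoinIterates_mono subset_union_left)
    (adjoinIterates_mono hsub), show ℓ * (n + 1) + m = ℓ * n + m + ℓ by ring]
  exact relfinrank_adjoinIterates_Icc_add (fun k hk ↦ h k (by omega)) ℓ

theorem relfinrank_Icc_union_block_Icc_le (hK : K.map (σ : Ω →+* Ω) = K) {ℓ m : ℕ}
    (h : (adjoinIterates σ K a (Icc 0 m ∪ block ℓ m 1)).relfinrank
      (adjoinIterates σ K a (Icc 0 (ℓ + m))) ≠ 0) (n : ℕ) :
    (adjoinIterates σ K a (Icc 0 (ℓ * n + m) ∪ block ℓ m (n + 1))).relfinrank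
        (adjoinIterates σ K a (Icc 0 (ℓ * (n + 1) + m))) ≤
      (adjoinIterates σ K a (Icc 0 m ∪ block ℓ m 1)).relfinrank
        (adjoinIterates σ K a (Icc 0 (ℓ + m))) := by
  have hshift : (adjoinIterates σ K a (block ℓ m n ∪ block ℓ m (n + 1))).relfinrank
      (adjoinIterates σ K a (Icc (ℓ * n) (ℓ * n + (ℓ + m)))) =
      (adjoinIterates σ K a (Icc 0 m ∪ block ℓ m 1)).relfinrank
        (adjoinIterates σ K a (Icc 0 (ℓ + m))) := by
    have := relfinrank_adjoinIterates_image_const_add (a := a) hK (ℓ * n)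
      (block ℓ m 0 ∪ block ℓ m 1) (Icc 0 (ℓ + m))
    rwa [image_union, image_const_add_block, image_const_add_block, image_const_add_Icc, add_zero,
      add_zero, block_zero] at this
  have hDE : adjoinIterates σ K a (block ℓ m n ∪ block ℓ m (n + 1)) ≤
      adjoinIterates σ K a (Icc 0 (ℓ * n + m) ∪ block ℓ m (n + 1)) :=
    adjoinIterates_mono (union_subset_union_left _ (Icc_subset_Icc_left (Nat.zero_le _)))
  have hDF : adjoinIterates σ K a (block ℓ m n ∪ block ℓ m (n + 1)) ≤
      adjoinIterates σ K a (Icc (ℓ * n) (ℓ * n + (ℓ + m))) :=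
    adjoinIterates_mono (union_subset (Icc_subset_Icc_right (by omega))
      (Icc_subset_Icc (by rw [mul_add_one]; omega) (by rw [mul_add_one]; omega)))
  have hsup : adjoinIterates σ K a (Icc 0 (ℓ * n + m) ∪ block ℓ m (n + 1)) ⊔
      adjoinIterates σ K a (Icc (ℓ * n) (ℓ * n + (ℓ + m))) =
      adjoinIterates σ K a (Icc 0 (ℓ * (n + 1) + m)) := by
    rw [← adjoinIterates_union]
    congr 1
    ext t
    simp only [block, mem_union, mem_Icc, mul_add_one]
    omega
  rw [← hshift] at h ⊢
  rw [← hsup]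
  exact Subfield.relfinrank_sup_le_of_le hDE hDF h

theorem blockDegree_eq_blockDegree_zero (hK : K.map (σ : Ω →+* Ω) = K) {m ld : ℕ}
    (hstab : ∀ n ≥ m, stepDegree σ K a n = ld) (hld : ld ≠ 0) (ℓ n : ℕ) :
    blockDegree σ K a ℓ m n = blockDegree σ K a ℓ m 0 := by
  set c : ℕ → ℕ := fun k ↦ (adjoinIterates σ K a (Icc 0 (ℓ * k + m))).relfinrank
    (adjoinIterates σ K a (Icc 0 (ℓ * k + m) ∪ block ℓ m (k + 1)))
  set g : ℕ → ℕ := fun k ↦ (adjoinIterates σ K a (Icc 0 (ℓ * k + m) ∪ block ℓ m (k + 1))).relfinrank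
    (adjoinIterates σ K a (Icc 0 (ℓ * (k + 1) + m)))
  have hcg : ∀ k, c k * g k = ld ^ ℓ := relfinrank_mul_relfinrank_Icc_union_block hstab ℓ
  have hne : ∀ k, c k ≠ 0 ∧ g k ≠ 0 := fun k ↦
    mul_ne_zero_iff.1 ((hcg k).trans_ne (pow_ne_zero ℓ hld))
  have hc0 : c 0 = blockDegree σ K a ℓ m 0 := by
    simp [c, blockDegree, blocks_succ, blocks_zero, block_zero]
  have hg : g n ≤ g 0 := by
    simpa [g] using relfinrank_Icc_union_block_Icc_le hK (by simpa [g] using (hne 0).2) n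
  obtain ⟨hn, hle⟩ := blockDegree_le_blockDegree_zero hK (hc0 ▸ (hne 0).1) n
  have hc : c 0 ≤ c n := by
    refine Nat.le_of_mul_le_mul_right ?_ (Nat.pos_of_ne_zero (hne n).2)
    calc c 0 * g n ≤ c 0 * g 0 := Nat.mul_le_mul_left _ hg
      _ = c n * g n := by rw [hcg, hcg]
  exact le_antisymm hle (hc0 ▸ hc.trans (relfinrank_Icc_union_block_le_blockDegree hn))

end LimitDegree

/-- Let `σ` be an automorphism of a field `Ω`, `K` a `σ`-stable
subfield, `a` a tuple in `Ω` with all degrees `[K_{n+1} : K_n]` finite, where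
`K_n = K(σ^i(a_j) : 0 ≤ i ≤ n)`; let `ld` be the limit degree, i.e. the eventual
constant value of this non-increasing sequence of degrees.  If `m` is such that
`[K_{m+1} : K_m] = ld` and `b = (σ^i(a_j) : 0 ≤ i ≤ m, j)`, then `ld_σ(b/K) = ld`,
and for every `ℓ ≥ 1` the limit degree of `b` over `K` with respect to `σ^ℓ` is
attained at the first step: `[L_{n+1} : L_n] = [L₁ : L₀]` for all `n`, where
`L_n = K(σ^{ℓ i}(b) : 0 ≤ i ≤ n)`. -/
theorem limit_degree_of_segment_tuple_attained_at_first_step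
    (Ω : Type*) [Field Ω] (σ : Ω ≃+* Ω) (K : Subfield Ω)
    (hK : K.map (σ : Ω →+* Ω) = K)
    (r : ℕ) (a : Fin r → Ω)
    (d : ℕ → ℕ) (hd : ∀ n : ℕ, d n = sdeg (seqField σ K a 1 n) (seqField σ K a 1 (n + 1)))
    (hfin : ∀ n : ℕ, 0 < d n)
    (ld : ℕ) (hld : ∃ N : ℕ, ∀ n ≥ N, d n = ld)
    (m : ℕ) (hm : d m = ld)
    (b : Fin r × Fin (m + 1) → Ω) (hb : ∀ (j : Fin r) (i : Fin (m + 1)), b (j, i) = (σ ^ (i : ℕ)) (a j))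
    (db : ℕ → ℕ) (hdb : ∀ n : ℕ, db n = sdeg (seqField σ K b 1 n) (seqField σ K b 1 (n + 1)))
    (dL : ℕ → ℕ → ℕ)
    (hdL : ∀ ℓ n : ℕ, dL ℓ n = sdeg (seqField σ K b ℓ n) (seqField σ K b ℓ (n + 1))) :
    (∃ N : ℕ, ∀ n ≥ N, db n = ld) ∧
    (∀ ℓ : ℕ, 1 ≤ ℓ → ∀ n : ℕ, dL ℓ n = dL ℓ 0) := by
  have hstep : ∀ n, d n = stepDegree σ K a n := fun n ↦ by
    rw [hd, sdeg_eq_relfinrank_of_le (seqField_mono 1 n.le_succ), seqField_one_eq_adjoinIterates,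
      seqField_one_eq_adjoinIterates, stepDegree]
  have hld0 : ld ≠ 0 := hm ▸ (hfin m).ne'
  obtain ⟨N, hN⟩ := hld
  have hstab : ∀ n ≥ m, stepDegree σ K a n = ld := fun _ ↦
    stepDegree_eq_of_le hK (hstep m ▸ hm) hld0 fun k hk ↦ hstep k ▸ hN k hk
  have hblock : ∀ ℓ n, dL ℓ n = blockDegree σ K a ℓ m n := fun ℓ n ↦ by
    rw [hdL, sdeg_eq_relfinrank_of_le (seqField_mono ℓ n.le_succ),
      seqField_eq_adjoinIterates_blocks hb, seqField_eq_adjoinIterates_blocks hb, blockDegree]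
  refine ⟨⟨0, fun n _ ↦ ?_⟩, fun ℓ _ n ↦ ?_⟩
  · rw [hdb, ← hdL, hblock, blockDegree, blocks_one_left, blocks_one_left, add_right_comm]
    exact hstab _ (Nat.le_add_left m n)
  · rw [hblock, hblock]
    exact blockDegree_eq_blockDegree_zero hK hstab hld0 ℓ n
end

section
/- Let Ω be a field with a ring automorphism σ, let k be a subfield of Ω with σ(k) = k, and let a = (a₁,…,a_r) be a tuple of elements of Ω. If the subfields k(σ^i(a) : i ≤ 0) and k(σ^i(a) : i ≥ 0) of Ω are linearly disjoint over k(a), then for every integer m ≥ 1 the subfields k(σ^{mi}(a) : i ≤ 0) and k(σ^{mi}(a) : i ≥ 0) are linearly disjoint over k(a); that is, the condition for the automorphism σ implies the analogous condition for each power σ^m. -/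
/-! Multiplication by `m ≥ 0` preserves the sign of an exponent, so the two fields built from
`σ ^ m` are subfields of those built from `σ`; linear disjointness passes to subfields. -/

set_option synthInstance.maxHeartbeats 1000000
set_option maxHeartbeats 2000000

/-- The subfield `k(σ^i(c_j) : i ∈ s, j)` of `Ω`, for a set `s` of integers. -/
def zSeqField {Ω : Type*} [Field Ω] (σ : Ω ≃+* Ω) (k : Subfield Ω) {ι : Type*}
    (c : ι → Ω) (s : Set ℤ) : Subfield Ω :=
  Subfield.closure ((k : Set Ω) ∪ {x | ∃ j : ι, ∃ i ∈ s, x = (σ ^ i) (c j)})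

theorem zSeqField_mono {Ω : Type*} [Field Ω] (σ : Ω ≃+* Ω) (k : Subfield Ω) {ι : Type*}
    (c : ι → Ω) {s t : Set ℤ} (hst : s ⊆ t) : zSeqField σ k c s ≤ zSeqField σ k c t :=
  Subfield.closure_mono <| Set.union_subset_union_right _ fun _ ⟨j, i, hi, hx⟩ =>
    ⟨j, i, hst hi, hx⟩

theorem zSeqField_pow {Ω : Type*} [Field Ω] (σ : Ω ≃+* Ω) (k : Subfield Ω) {ι : Type*}
    (c : ι → Ω) (m : ℕ) (s : Set ℤ) :
    zSeqField (σ ^ m) k c s = zSeqField σ k c ((fun i : ℤ => (m : ℤ) * i) '' s) := by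
  have hpow : ∀ i : ℤ, (σ ^ m) ^ i = σ ^ ((m : ℤ) * i) := fun i => by
    rw [← zpow_natCast, zpow_mul]
  unfold zSeqField
  congr 2
  ext x
  simp only [Set.exists_mem_image, hpow]

theorem linearDisjoint_of_power_of_linearDisjoint_general
    (Ω : Type*) [Field Ω] (σ : Ω ≃+* Ω) (k : Subfield Ω)
    (r : ℕ) (a : Fin r → Ω)
    (E Fneg Fpos : Subfield Ω)
    (hFneg : Fneg = zSeqField σ k a {i : ℤ | i ≤ 0})
    (hFpos : Fpos = zSeqField σ k a {i : ℤ | 0 ≤ i})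
    (hdisj : (IntermediateField.adjoin E (Fneg : Set Ω)).LinearDisjoint
      (IntermediateField.adjoin E (Fpos : Set Ω))) :
    ∀ m : ℕ, 1 ≤ m →
      ∀ Fneg' Fpos' : Subfield Ω,
        Fneg' = zSeqField (σ ^ m) k a {i : ℤ | i ≤ 0} →
        Fpos' = zSeqField (σ ^ m) k a {i : ℤ | 0 ≤ i} →
        (IntermediateField.adjoin E (Fneg' : Set Ω)).LinearDisjoint
          (IntermediateField.adjoin E (Fpos' : Set Ω)) := by
  rintro m - Fneg' Fpos' rfl rfl
  subst hFneg hFpos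
  have hneg : zSeqField (σ ^ m) k a {i : ℤ | i ≤ 0} ≤ zSeqField σ k a {i : ℤ | i ≤ 0} := by
    rw [zSeqField_pow]
    exact zSeqField_mono σ k a <| Set.image_subset_iff.2 fun i hi =>
      mul_nonpos_of_nonneg_of_nonpos (Int.natCast_nonneg m) hi
  have hpos : zSeqField (σ ^ m) k a {i : ℤ | 0 ≤ i} ≤ zSeqField σ k a {i : ℤ | 0 ≤ i} := by
    rw [zSeqField_pow]
    exact zSeqField_mono σ k a <| Set.image_subset_iff.2 fun i hi =>
      mul_nonneg (Int.natCast_nonneg m) hi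
  exact hdisj.of_le (IntermediateField.adjoin.mono _ _ _ hneg)
    (IntermediateField.adjoin.mono _ _ _ hpos)

/-- Let `σ` be an automorphism of a field `Ω`, `k` a `σ`-stable
subfield and `a` a tuple in `Ω`.  If the subfields `k(σ^i(a) : i ≤ 0)` and
`k(σ^i(a) : i ≥ 0)` are linearly disjoint over `k(a)`, then for every `m ≥ 1` the
subfields `k(σ^{m i}(a) : i ≤ 0)` and `k(σ^{m i}(a) : i ≥ 0)` are linearly disjoint
over `k(a)`. -/
theorem linearDisjoint_of_power_of_linearDisjoint
    (Ω : Type*) [Field Ω] (σ : Ω ≃+* Ω) (k : Subfield Ω)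
    (hk : k.map (σ : Ω →+* Ω) = k)
    (r : ℕ) (a : Fin r → Ω)
    (E Fneg Fpos : Subfield Ω)
    (hE : E = zSeqField σ k a {0})
    (hFneg : Fneg = zSeqField σ k a {i : ℤ | i ≤ 0})
    (hFpos : Fpos = zSeqField σ k a {i : ℤ | 0 ≤ i})
    (hdisj : (IntermediateField.adjoin E (Fneg : Set Ω)).LinearDisjoint
      (IntermediateField.adjoin E (Fpos : Set Ω))) :
    ∀ m : ℕ, 1 ≤ m →
      ∀ Fneg' Fpos' : Subfield Ω,
        Fneg' = zSeqField (σ ^ m) k a {i : ℤ | i ≤ 0} →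
        Fpos' = zSeqField (σ ^ m) k a {i : ℤ | 0 ≤ i} →
        (IntermediateField.adjoin E (Fneg' : Set Ω)).LinearDisjoint
          (IntermediateField.adjoin E (Fpos' : Set Ω)) :=
  linearDisjoint_of_power_of_linearDisjoint_general Ω σ k r a E Fneg Fpos hFneg hFpos hdisj
end
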